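/- arXiv:1403.3975 — 4 statements merged into one kernel-verified Lean document; each statement's English description precedes it below -/
import Mathlib

section
/- Let f : M → N be a covering-type finite map situation encoded combinatorially: suppose f has degree n and there is a group G (the fundamental group of N minus the branch locus) acting transitively on a set of size n (the fiber), with point stabilizer H of index n. If some element α of G acts as an n-cycle on the fiber (transitive cyclic action), then every intermediate subgroup K with H ≤ K ≤ G has index in G dividing n, and distinct intermediate subgroups have distinct indices; in particular the lattice of intermediate subgroups embeds into the divisor lattice of n. -/
section Aux
variable {G : Type*} [Group G]

/-- The set of integers `k` with `α ^ k ∈ K`, as an additive subgroup of `ℤ`. -/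
def auxS (α : G) (K : Subgroup G) : AddSubgroup ℤ where
  carrier := {k : ℤ | α ^ k ∈ K}
  zero_mem' := by simpa using K.one_mem
  add_mem' := by
    intro a b ha hb
    simpa [zpow_add] using mul_mem ha hb
  neg_mem' := by
    intro a ha
    have : (α ^ a)⁻¹ ∈ K := K.inv_mem ha
    simpa [zpow_neg] using this

lemma mem_auxS {α : G} {K : Subgroup G} {k : ℤ} : k ∈ auxS α K ↔ α ^ k ∈ K := Iff.rfl

lemma zmultiples_neg (d : ℤ) : AddSubgroup.zmultiples (-d) = AddSubgroup.zmultiples d := by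
  ext x
  simp only [AddSubgroup.mem_zmultiples_iff]
  constructor
  · rintro ⟨k, rfl⟩; exact ⟨-k, by simp⟩
  · rintro ⟨k, rfl⟩; exact ⟨-k, by simp⟩

lemma auxS_index {X : Type*} [MulAction G X] (x₀ : X) (α : G)
    (hα : ∀ x y : X, ∃ k : ℕ, α ^ k • x = y)
    (K : Subgroup G) (hK : MulAction.stabilizer G x₀ ≤ K) :
    (auxS α K).index = K.index := by
  have e : (ℤ ⧸ auxS α K) ≃ (G ⧸ K) := by
    refine Equiv.ofBijective
      (fun q => Quotient.liftOn' q (fun k => QuotientGroup.mk (α ^ k)) ?_) ⟨?_, ?_⟩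
    · intro a b hab
      rw [QuotientAddGroup.leftRel_apply] at hab
      refine (QuotientGroup.eq).mpr ?_
      have : α ^ (-a + b) ∈ K := hab
      simpa [zpow_add, zpow_neg] using this
    · intro a b
      induction a using Quotient.inductionOn'
      induction b using Quotient.inductionOn'
      rename_i a b
      intro hab
      simp only [Quotient.liftOn'_mk''] at hab
      rw [QuotientGroup.eq] at hab
      refine Quotient.sound' ?_
      rw [QuotientAddGroup.leftRel_apply]
      show α ^ (-a + b) ∈ K
      simpa [zpow_add, zpow_neg] using hab
    · intro q
      induction q using Quotient.inductionOn'
      rename_i g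
      obtain ⟨k, hk⟩ := hα x₀ (g • x₀)
      refine ⟨QuotientAddGroup.mk (k : ℤ), ?_⟩
      show QuotientGroup.mk (α ^ (k : ℤ)) = QuotientGroup.mk g
      refine (QuotientGroup.eq).mpr (hK ?_)
      have : ((α ^ (k : ℤ))⁻¹ * g) • x₀ = x₀ := by
        rw [mul_smul, zpow_natCast, ← hk, inv_smul_smul]
      exact this
  rw [AddSubgroup.index, Subgroup.index, Nat.card_congr e]

lemma mem_iff_pow_mem {X : Type*} [MulAction G X] (x₀ : X) (α : G)
    (K : Subgroup G) (hK : MulAction.stabilizer G x₀ ≤ K)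
    (g : G) (k : ℕ) (hk : α ^ k • x₀ = g • x₀) :
    g ∈ K ↔ α ^ k ∈ K := by
  have hmem : (α ^ k)⁻¹ * g ∈ K := by
    refine hK ?_
    show ((α ^ k)⁻¹ * g) • x₀ = x₀
    rw [mul_smul, ← hk, inv_smul_smul]
  constructor
  · intro hg
    have := mul_mem hg (inv_mem hmem)
    simpa [mul_assoc] using this
  · intro ha
    have := mul_mem ha hmem
    simpa using this

end Aux

/-- Let `G` act transitively on a finite set `X` of size `n`, let
`H = Stab_G(x₀)` (of index `n`), and suppose some `α ∈ G` acts on `X` as a single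
`n`-cycle (its powers act transitively).  Then every intermediate subgroup
`H ≤ K ≤ G` has index dividing `n`, distinct intermediate subgroups have distinct
indices, and the index map is order-reversing for divisibility; in particular the
lattice of intermediate subgroups embeds into the divisor lattice of `n` ordered
by reverse divisibility. -/
theorem stmt_6 {G : Type*} [Group G] {X : Type*} [Fintype X] [MulAction G X]
    [MulAction.IsPretransitive G X]
    (x₀ : X) (α : G) (hα : ∀ x y : X, ∃ k : ℕ, α ^ k • x = y)
    (n : ℕ) (hn : Fintype.card X = n) :
    (∀ K : Subgroup G, MulAction.stabilizer G x₀ ≤ K → K.index ∣ n) ∧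
    (∀ K₁ K₂ : Subgroup G, MulAction.stabilizer G x₀ ≤ K₁ →
      MulAction.stabilizer G x₀ ≤ K₂ → K₁.index = K₂.index → K₁ = K₂) ∧
    (∀ K₁ K₂ : Subgroup G, MulAction.stabilizer G x₀ ≤ K₁ →
      MulAction.stabilizer G x₀ ≤ K₂ → K₁ ≤ K₂ → K₂.index ∣ K₁.index) := by
  have hHindex : (MulAction.stabilizer G x₀).index = n := by
    rw [MulAction.index_stabilizer_of_transitive, Nat.card_eq_fintype_card, hn]
  refine ⟨?_, ?_, ?_⟩
  · intro K hK
    calc K.index ∣ (MulAction.stabilizer G x₀).index := Subgroup.index_dvd_of_le hK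
    _ = n := hHindex
  · intro K₁ K₂ hK₁ hK₂ hidx
    -- the two additive subgroups of ℤ have equal index, hence are equal
    have hS : auxS α K₁ = auxS α K₂ := by
      have h1 := auxS_index x₀ α hα K₁ hK₁
      have h2 := auxS_index x₀ α hα K₂ hK₂
      obtain ⟨d₁, hd₁⟩ := Int.subgroup_cyclic (auxS α K₁)
      obtain ⟨d₂, hd₂⟩ := Int.subgroup_cyclic (auxS α K₂)
      rw [← AddSubgroup.zmultiples_eq_closure] at hd₁ hd₂
      rw [hd₁, Int.index_zmultiples] at h1
      rw [hd₂, Int.index_zmultiples] at h2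
      have habs : d₁.natAbs = d₂.natAbs := by omega
      rw [hd₁, hd₂]
      rcases Int.natAbs_eq_natAbs_iff.mp habs with h | h
      · rw [h]
      · rw [h, zmultiples_neg]
    ext g
    obtain ⟨k, hk⟩ := hα x₀ (g • x₀)
    rw [mem_iff_pow_mem x₀ α K₁ hK₁ g k hk, mem_iff_pow_mem x₀ α K₂ hK₂ g k hk]
    have : ((k : ℤ) ∈ auxS α K₁) ↔ ((k : ℤ) ∈ auxS α K₂) := by rw [hS]
    simpa [mem_auxS, zpow_natCast] using this
  · intro K₁ K₂ _ _ hle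
    exact Subgroup.index_dvd_of_le hle
end

section
/- Let G be a group acting transitively on a finite set of size n containing an element acting as an n-cycle, and let H be a point stabilizer. Then the set of indices {[G:K] : H ≤ K ≤ G} of intermediate subgroups K between H and G is closed under gcd and lcm. -/
set_option linter.unusedSectionVars false

open MulAction Pointwise

namespace Stmt7Aux

lemma zmod_eq_of_dvd {e : ℕ} [NeZero e] (k k' : ZMod e)
    (h : (e : ℤ) ∣ (k.val : ℤ) - (k'.val : ℤ)) : k = k' := by
  have h2 : (((k.val : ℤ) - (k'.val : ℤ) : ℤ) : ZMod e) = 0 :=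
    (ZMod.intCast_zmod_eq_zero_iff_dvd _ e).2 h
  push_cast at h2
  rw [sub_eq_zero] at h2
  simpa [ZMod.natCast_val, ZMod.cast_id] using h2

lemma dvd_val_sub {e : ℕ} [NeZero e] (m : ℤ) :
    (e : ℤ) ∣ (((m : ZMod e).val : ℤ) - m) := by
  rw [← ZMod.intCast_zmod_eq_zero_iff_dvd]
  push_cast
  simp [ZMod.natCast_val, ZMod.cast_id, ZMod.intCast_cast, sub_eq_zero]

variable {G : Type*} [Group G] {X : Type*} [Fintype X] [MulAction G X]

lemma hsurj (x₀ : X) (α : G) (hα : ∀ x y : X, ∃ k : ℕ, α ^ k • x = y) (y : X) :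
    ∃ m : ℤ, α ^ m • x₀ = y := by
  obtain ⟨k, hk⟩ := hα x₀ y
  exact ⟨k, by rw [zpow_natCast]; exact hk⟩

lemma per (x₀ : X) (α : G) (hα : ∀ x y : X, ∃ k : ℕ, α ^ k • x = y) {n : ℕ}
    (hn : Fintype.card X = n) (m : ℤ) : α ^ m • x₀ = x₀ ↔ (n : ℤ) ∣ m := by
  -- subgroup of periods
  set T : AddSubgroup ℤ :=
    { carrier := {m : ℤ | α ^ m • x₀ = x₀}
      zero_mem' := by simp
      add_mem' := by
        intro a b ha hb
        simp only [Set.mem_setOf_eq] at *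
        rw [zpow_add, mul_smul, hb, ha]
      neg_mem' := by
        intro a ha
        simp only [Set.mem_setOf_eq] at *
        conv_lhs => rw [← ha]
        rw [← mul_smul, ← zpow_add, neg_add_cancel, zpow_zero, one_smul] } with hT
  have memT : ∀ m : ℤ, m ∈ T ↔ α ^ m • x₀ = x₀ := fun m => Iff.rfl
  have hsub : ∀ a b : ℤ, α ^ a • x₀ = α ^ b • x₀ ↔ (a - b) ∈ T := by
    intro a b
    rw [memT]
    constructor
    · intro h
      have h2 : α ^ (-b) • α ^ a • x₀ = α ^ (-b) • α ^ b • x₀ := by rw [h]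
      rw [← mul_smul, ← mul_smul, ← zpow_add, ← zpow_add, neg_add_cancel, zpow_zero,
        one_smul] at h2
      rwa [show -b + a = a - b by ring] at h2
    · intro h
      have : α ^ b • α ^ (a - b) • x₀ = α ^ b • x₀ := by rw [h]
      rwa [← mul_smul, ← zpow_add, add_sub_cancel] at this
  obtain ⟨a, ha⟩ := Int.subgroup_cyclic T
  have memT' : ∀ m : ℤ, m ∈ T ↔ a ∣ m := by
    intro m
    rw [ha, AddSubgroup.mem_closure_singleton]
    constructor
    · rintro ⟨k, hk⟩; exact ⟨k, by rw [← hk, smul_eq_mul]; ring⟩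
    · rintro ⟨k, hk⟩; exact ⟨k, by rw [hk, smul_eq_mul]; ring⟩
  -- a ≠ 0 since X is finite
  have ha0 : a ≠ 0 := by
    obtain ⟨c, b, hne, hcb⟩ :=
      Finite.exists_ne_map_eq_of_infinite (fun m : ℤ => α ^ m • x₀)
    intro h0
    have : (c - b) ∈ T := (hsub c b).1 hcb
    rw [memT', h0] at this
    exact hne (by omega)
  set e := a.natAbs with he
  have he0 : e ≠ 0 := Int.natAbs_ne_zero.2 ha0
  haveI : NeZero e := ⟨he0⟩
  have memT'' : ∀ m : ℤ, m ∈ T ↔ (e : ℤ) ∣ m := by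
    intro m; rw [memT']; exact (Int.natAbs_dvd).symm
  -- bijection ZMod e ≃ X
  have hbij : Function.Bijective (fun k : ZMod e => α ^ (k.val : ℤ) • x₀) := by
    constructor
    · intro k k' hkk
      refine zmod_eq_of_dvd k k' ?_
      rw [← memT'']
      exact (hsub _ _).1 hkk
    · intro y
      obtain ⟨m, hm⟩ := hsurj x₀ α hα y
      refine ⟨(m : ZMod e), ?_⟩
      simp only
      rw [← hm]
      rw [hsub]
      rw [memT'']
      exact dvd_val_sub m
  have hcard : e = n := by
    have h1 : Nat.card (ZMod e) = Nat.card X := Nat.card_eq_of_bijective _ hbij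
    rwa [Nat.card_zmod, Nat.card_eq_fintype_card, hn] at h1
  rw [← hcard]
  rw [show (α ^ m • x₀ = x₀) ↔ m ∈ T from Iff.rfl, memT'']

lemma decomp (x₀ : X) (α : G) (hα : ∀ x y : X, ∃ k : ℕ, α ^ k • x = y)
    (K : Subgroup G) (hK : stabilizer G x₀ ≤ K) {g : G} (hg : g ∈ K) :
    ∃ m : ℤ, α ^ m ∈ K ∧ ∃ h ∈ stabilizer G x₀, g = α ^ m * h := by
  obtain ⟨m, hm⟩ := hsurj x₀ α hα (g • x₀)
  have hh : α ^ (-m) * g ∈ stabilizer G x₀ := by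
    rw [mem_stabilizer_iff, mul_smul, ← hm, ← mul_smul, zpow_neg, inv_mul_cancel, one_smul]
  refine ⟨m, ?_, α ^ (-m) * g, hh, ?_⟩
  · have h1 : α ^ m = g * (α ^ (-m) * g)⁻¹ := by
      rw [zpow_neg]; group
    rw [h1]
    exact K.mul_mem hg (K.inv_mem (hK hh))
  · rw [← mul_assoc, ← zpow_add, add_neg_cancel, zpow_zero, one_mul]

lemma index_eq (x₀ : X) (α : G) (hα : ∀ x y : X, ∃ k : ℕ, α ^ k • x = y)
    (K : Subgroup G) (hK : stabilizer G x₀ ≤ K) (d : ℕ) (hd : d ≠ 0)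
    (hchar : ∀ m : ℤ, α ^ m ∈ K ↔ (d : ℤ) ∣ m) : K.index = d := by
  haveI : NeZero d := ⟨hd⟩
  set B : Set X := (fun g : G => g • x₀) '' (K : Set G) with hB
  have hmemB : ∀ x : X, x ∈ B ↔ ∃ k ∈ K, k • x₀ = x := by
    intro x; simp [hB]
  have hstab : stabilizer G B = K := by
    ext g
    rw [mem_stabilizer_iff]
    constructor
    · intro hgB
      have hx₀B : x₀ ∈ B := (hmemB x₀).2 ⟨1, K.one_mem, one_smul _ _⟩
      have hgx : g • x₀ ∈ B := by
        rw [← hgB]; exact Set.smul_mem_smul_set hx₀B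
      obtain ⟨k, hk, hkx⟩ := (hmemB _).1 hgx
      have : k⁻¹ * g ∈ stabilizer G x₀ := by
        rw [mem_stabilizer_iff, mul_smul, ← hkx, ← mul_smul, inv_mul_cancel, one_smul]
      have := K.mul_mem hk (hK this)
      rwa [← mul_assoc, mul_inv_cancel, one_mul] at this
    · intro hg
      apply le_antisymm
      · rintro x ⟨y, hy, rfl⟩
        obtain ⟨k, hk, rfl⟩ := (hmemB y).1 hy
        exact (hmemB _).2 ⟨g * k, K.mul_mem hg hk, by simp [mul_smul]⟩
      · intro x hx
        obtain ⟨k, hk, rfl⟩ := (hmemB x).1 hx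
        refine ⟨(g⁻¹ * k) • x₀, (hmemB _).2 ⟨g⁻¹ * k, K.mul_mem (K.inv_mem hg) hk, rfl⟩, ?_⟩
        show g • ((g⁻¹ * k) • x₀) = k • x₀
        rw [← mul_smul, ← mul_assoc, mul_inv_cancel, one_mul]
  have hBd : ∀ a b : ℤ, ((d : ℤ) ∣ a - b) ↔ α ^ a • B = α ^ b • B := by
    intro a b
    constructor
    · intro hab
      have h1 : α ^ (a - b) ∈ K := (hchar _).2 hab
      rw [← hstab, mem_stabilizer_iff] at h1
      calc α ^ a • B = (α ^ b * α ^ (a - b)) • B := by rw [← zpow_add]; ring_nf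
        _ = α ^ b • (α ^ (a - b) • B) := mul_smul _ _ _
        _ = α ^ b • B := by rw [h1]
    · intro hab
      have h1 : α ^ (a - b) • B = B := by
        have := congrArg (fun s => α ^ (-b) • s) hab
        rwa [← mul_smul, ← mul_smul, ← zpow_add, ← zpow_add, neg_add_cancel, zpow_zero,
          one_smul, show -b + a = a - b by ring] at this
      exact (hchar _).1 (by rw [← hstab]; exact h1)
  have hbij : Function.Bijective
      (fun k : ZMod d => (⟨α ^ (k.val : ℤ) • B, mem_orbit B _⟩ : orbit G B)) := by
    constructor
    · intro k k' hkk
      have h1 : α ^ ((k.val : ℤ)) • B = α ^ ((k'.val : ℤ)) • B := congrArg Subtype.val hkk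
      exact zmod_eq_of_dvd k k' ((hBd _ _).2 h1)
    · rintro ⟨y, hy⟩
      obtain ⟨g, hg⟩ := MulAction.mem_orbit_iff.1 hy
      obtain ⟨m, hm⟩ := hsurj x₀ α hα (g • x₀)
      have h1 : α ^ (-m) * g ∈ stabilizer G B := by
        rw [hstab]
        apply hK
        rw [mem_stabilizer_iff, mul_smul, ← hm, ← mul_smul, zpow_neg, inv_mul_cancel, one_smul]
      have h2 : g • B = α ^ m • B := by
        rw [mem_stabilizer_iff] at h1
        calc g • B = (α ^ m * (α ^ (-m) * g)) • B := by
              rw [← mul_assoc, ← zpow_add, add_neg_cancel, zpow_zero, one_mul]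
          _ = α ^ m • ((α ^ (-m) * g) • B) := mul_smul _ _ _
          _ = α ^ m • B := by rw [h1]
      refine ⟨(m : ZMod d), ?_⟩
      apply Subtype.ext
      simp only
      rw [(hBd _ _).1 (dvd_val_sub m), ← h2, hg]
  have h1 : K.index = Nat.card (orbit G B) := by
    rw [← hstab, Subgroup.index_eq_card]
    exact (Nat.card_congr (MulAction.orbitEquivQuotientStabilizer G B)).symm
  rw [h1, ← Nat.card_eq_of_bijective _ hbij, Nat.card_zmod]

lemma exists_char (x₀ : X) (α : G) (hα : ∀ x y : X, ∃ k : ℕ, α ^ k • x = y) {n : ℕ}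
    (hn : Fintype.card X = n) (hn0 : n ≠ 0)
    (K : Subgroup G) (hK : stabilizer G x₀ ≤ K) :
    ∃ d : ℕ, d ≠ 0 ∧ d ∣ n ∧ ∀ m : ℤ, α ^ m ∈ K ↔ (d : ℤ) ∣ m := by
  set T : AddSubgroup ℤ :=
    { carrier := {m : ℤ | α ^ m ∈ K}
      zero_mem' := by simp [K.one_mem]
      add_mem' := by
        intro a b ha hb
        simp only [Set.mem_setOf_eq, zpow_add] at *
        exact K.mul_mem ha hb
      neg_mem' := by
        intro a ha
        simp only [Set.mem_setOf_eq, zpow_neg] at *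
        exact K.inv_mem ha } with hT
  obtain ⟨a, ha⟩ := Int.subgroup_cyclic T
  have memT : ∀ m : ℤ, α ^ m ∈ K ↔ a ∣ m := by
    intro m
    rw [show (α ^ m ∈ K) ↔ m ∈ T from Iff.rfl, ha, AddSubgroup.mem_closure_singleton]
    constructor
    · rintro ⟨k, hk⟩; exact ⟨k, by rw [← hk, smul_eq_mul]; ring⟩
    · rintro ⟨k, hk⟩; exact ⟨k, by rw [hk, smul_eq_mul]; ring⟩
  have hna : a ∣ (n : ℤ) := by
    rw [← memT]
    apply hK
    rw [mem_stabilizer_iff, per x₀ α hα hn]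
  refine ⟨a.natAbs, ?_, ?_, ?_⟩
  · intro h0
    rw [Int.natAbs_eq_zero] at h0
    rw [h0] at hna
    exact hn0 (by exact_mod_cast zero_dvd_iff.1 hna)
  · have := Int.natAbs_dvd_natAbs.2 hna
    simpa using this
  · intro m
    rw [memT, Int.natAbs_dvd]

end Stmt7Aux

open Stmt7Aux

/-- Let `G` act transitively on a finite set `X` of size `n`
containing an element `α` acting as an `n`-cycle, and let `H = Stab_G(x₀)`.
Then the set of indices `{[G:K] : H ≤ K ≤ G}` of intermediate subgroups is
closed under `gcd` and `lcm`. -/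
theorem stmt_7 {G : Type*} [Group G] {X : Type*} [Fintype X] [MulAction G X]
    [MulAction.IsPretransitive G X]
    (x₀ : X) (α : G) (hα : ∀ x y : X, ∃ k : ℕ, α ^ k • x = y)
    (n : ℕ) (hn : Fintype.card X = n) :
    ∀ i ∈ {m : ℕ | ∃ K : Subgroup G, MulAction.stabilizer G x₀ ≤ K ∧ K.index = m},
    ∀ j ∈ {m : ℕ | ∃ K : Subgroup G, MulAction.stabilizer G x₀ ≤ K ∧ K.index = m},
      Nat.gcd i j ∈ {m : ℕ | ∃ K : Subgroup G, MulAction.stabilizer G x₀ ≤ K ∧ K.index = m} ∧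
      Nat.lcm i j ∈ {m : ℕ | ∃ K : Subgroup G, MulAction.stabilizer G x₀ ≤ K ∧ K.index = m} := by
  have hn0 : n ≠ 0 := by
    have : 0 < Fintype.card X := Fintype.card_pos_iff.2 ⟨x₀⟩
    omega
  rintro i ⟨K₁, hleK₁, hiK₁⟩ j ⟨K₂, hleK₂, hjK₂⟩
  obtain ⟨d₁, hd₁0, hd₁n, hc₁⟩ := exists_char x₀ α hα hn hn0 K₁ hleK₁
  obtain ⟨d₂, hd₂0, hd₂n, hc₂⟩ := exists_char x₀ α hα hn hn0 K₂ hleK₂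
  have hieq : i = d₁ := by rw [← hiK₁]; exact index_eq x₀ α hα K₁ hleK₁ d₁ hd₁0 hc₁
  have hjeq : j = d₂ := by rw [← hjK₂]; exact index_eq x₀ α hα K₂ hleK₂ d₂ hd₂0 hc₂
  subst hieq hjeq
  constructor
  · -- gcd : build S = ⟨α^d⟩ H
    set d : ℕ := Nat.gcd i j with hd
    have hd0 : d ≠ 0 := Nat.gcd_ne_zero_left hd₁0
    have hdi : (d : ℤ) ∣ (i : ℤ) := Int.natCast_dvd_natCast.2 (Nat.gcd_dvd_left _ _)
    have hdj : (d : ℤ) ∣ (j : ℤ) := Int.natCast_dvd_natCast.2 (Nat.gcd_dvd_right _ _)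
    have hdn : (d : ℤ) ∣ (n : ℤ) :=
      Int.natCast_dvd_natCast.2 (dvd_trans (Nat.gcd_dvd_left _ _) hd₁n)
    have bezout : ∀ m : ℤ, (d : ℤ) ∣ m → ∃ s t : ℤ, m = (i : ℤ) * s + (j : ℤ) * t := by
      rintro m ⟨c, rfl⟩
      refine ⟨Int.gcdA i j * c, Int.gcdB i j * c, ?_⟩
      have h := Int.gcd_eq_gcd_ab (i : ℤ) (j : ℤ)
      have h2 : ((d : ℤ)) = (Int.gcd (i : ℤ) (j : ℤ) : ℤ) := by
        rw [hd, Int.gcd_natCast_natCast]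
      rw [h2, h]; ring
    have hstep : ∀ h ∈ MulAction.stabilizer G x₀, ∀ m : ℤ, (d : ℤ) ∣ m →
        ∃ a : ℤ, (d : ℤ) ∣ a ∧ ∃ h' ∈ MulAction.stabilizer G x₀, h * α ^ m = α ^ a * h' := by
      intro h hh m hm
      obtain ⟨s, t, rfl⟩ := bezout m hm
      have hg₁ : h * α ^ ((i : ℤ) * s) ∈ K₁ :=
        K₁.mul_mem (hleK₁ hh) ((hc₁ _).2 (Dvd.intro _ rfl))
      obtain ⟨m₁, hm₁K, h₁, hh₁, hdec₁⟩ := decomp x₀ α hα K₁ hleK₁ hg₁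
      have hdm₁ : (d : ℤ) ∣ m₁ := dvd_trans hdi ((hc₁ _).1 hm₁K)
      have hg₂ : h₁ * α ^ ((j : ℤ) * t) ∈ K₂ :=
        K₂.mul_mem (hleK₂ hh₁) ((hc₂ _).2 (Dvd.intro _ rfl))
      obtain ⟨m₂, hm₂K, h₂, hh₂, hdec₂⟩ := decomp x₀ α hα K₂ hleK₂ hg₂
      have hdm₂ : (d : ℤ) ∣ m₂ := dvd_trans hdj ((hc₂ _).1 hm₂K)
      refine ⟨m₁ + m₂, dvd_add hdm₁ hdm₂, h₂, hh₂, ?_⟩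
      rw [zpow_add, ← mul_assoc, hdec₁, mul_assoc, hdec₂, ← mul_assoc, ← zpow_add]
    set S : Subgroup G :=
      { carrier := {g : G | ∃ m : ℤ, (d : ℤ) ∣ m ∧ ∃ h ∈ MulAction.stabilizer G x₀,
          g = α ^ m * h}
        one_mem' := ⟨0, dvd_zero _, 1, Subgroup.one_mem _, by simp⟩
        mul_mem' := by
          rintro g g' ⟨m, hm, h, hh, rfl⟩ ⟨m', hm', h', hh', rfl⟩
          obtain ⟨a, ha, h₂, hh₂, heq⟩ := hstep h hh m' hm'
          refine ⟨m + a, dvd_add hm ha, h₂ * h', Subgroup.mul_mem _ hh₂ hh', ?_⟩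
          have h3 : α ^ m * h * (α ^ m' * h') = α ^ m * (h * α ^ m') * h' := by group
          rw [h3, heq, zpow_add]; group
        inv_mem' := by
          rintro g ⟨m, hm, h, hh, rfl⟩
          obtain ⟨a, ha, h₂, hh₂, heq⟩ :=
            hstep h⁻¹ (Subgroup.inv_mem _ hh) (-m) (dvd_neg.2 hm)
          refine ⟨a, ha, h₂, hh₂, ?_⟩
          have h3 : (α ^ m * h)⁻¹ = h⁻¹ * α ^ (-m) := by
            rw [mul_inv_rev, zpow_neg]
          rw [h3, heq] } with hS
    have hleS : MulAction.stabilizer G x₀ ≤ S := by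
      intro h hh
      exact ⟨0, dvd_zero _, h, hh, by simp⟩
    have hcharS : ∀ m : ℤ, α ^ m ∈ S ↔ (d : ℤ) ∣ m := by
      intro m
      constructor
      · rintro ⟨m', hm', h, hh, heq⟩
        have hmem : α ^ (m - m') ∈ MulAction.stabilizer G x₀ := by
          have : α ^ (m - m') = h := by
            rw [sub_eq_neg_add, zpow_add, heq, zpow_neg]; group
          rw [this]; exact hh
        rw [mem_stabilizer_iff, per x₀ α hα hn] at hmem
        have : (d : ℤ) ∣ m - m' := dvd_trans hdn hmem
        have h4 := dvd_add this hm'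
        rwa [sub_add_cancel] at h4
      · intro hm
        exact ⟨m, hm, 1, Subgroup.one_mem _, (mul_one _).symm⟩
    exact ⟨S, hleS, index_eq x₀ α hα S hleS d hd0 hcharS⟩
  · -- lcm : K₁ ⊓ K₂
    set L : ℕ := Nat.lcm i j with hL
    have hL0 : L ≠ 0 := Nat.lcm_ne_zero hd₁0 hd₂0
    have hle : MulAction.stabilizer G x₀ ≤ K₁ ⊓ K₂ := le_inf hleK₁ hleK₂
    have hchar : ∀ m : ℤ, α ^ m ∈ K₁ ⊓ K₂ ↔ (L : ℤ) ∣ m := by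
      intro m
      rw [Subgroup.mem_inf, hc₁, hc₂]
      constructor
      · rintro ⟨h1, h2⟩
        have := Int.natCast_dvd.2 (Int.lcm_dvd (Int.dvd_natAbs.2 h1) (Int.dvd_natAbs.2 h2))
        have hLL : Int.lcm (i : ℤ) (j : ℤ) = L := by
          rw [hL]; simp [Int.lcm]
        rwa [hLL] at this
      · intro hLm
        exact ⟨dvd_trans (Int.natCast_dvd_natCast.2 (Nat.dvd_lcm_left _ _)) hLm,
          dvd_trans (Int.natCast_dvd_natCast.2 (Nat.dvd_lcm_right _ _)) hLm⟩
    exact ⟨K₁ ⊓ K₂, hle, index_eq x₀ α hα (K₁ ⊓ K₂) hle L hL0 hchar⟩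
end

section
/- Let f be a finite Blaschke product of degree s ≥ 2 such that f^t is totally ramified for some integer t ≥ 2 (i.e., f^t is associated to z^{s^t} via pre- and post-composition with disk automorphisms). Then there exist p in the unit disk and ρ on the unit circle such that f = ι_p ∘ (ρ z^s) ∘ ι_{-p}, where ι_p(z) = (z + p)/(1 + conj(p)·z). -/
/-!
Total ramification of `f^[t]` means that it has exactly one critical point `p` in the disk. By the
chain rule some point of the orbit of `p` is critical for `f`, hence for `f^[t]`, hence equals `p`;
so `f' p = 0`, and then every `z` with `f z = p` is critical for `f^[t]`, i.e. `z = p`.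

Write `f = P / Q` with `P = ρ ∏ (z - aᵢ)` and `Q = ∏ (1 - conj aᵢ z)`. The polynomial `P - p Q` has
degree `s`, no zero with `|z| ≥ 1` (there `|P| ≥ |Q|`), and in the disk it vanishes only at `p`,
so `P - p Q = c (z - p) ^ s`. Reflecting this identity in the unit circle, which swaps `P` and `Q`
up to `ρ`, gives `Q - conj p P = ρ conj c (1 - conj p z) ^ s`, and the quotient of the two
identities reads `ι_{-p} ∘ f = (c / (ρ conj c)) (ι_{-p}) ^ s`.
-/

/-- The open unit disk in `ℂ`. -/
def unitDisk : Set ℂ := Metric.ball 0 1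

/-- The rational function `ρ · ∏ᵢ (z - aᵢ)/(1 - conj(aᵢ)·z)`. -/
noncomputable def blaschkeFun (ρ : ℂ) (l : List ℂ) (z : ℂ) : ℂ :=
  ρ * (l.map fun a => (z - a) / (1 - (starRingEnd ℂ) a * z)).prod

/-- `f` is a finite Blaschke product of degree `n`. -/
def IsBlaschke (n : ℕ) (f : ℂ → ℂ) : Prop :=
  ∃ (ρ : ℂ) (l : List ℂ), ‖ρ‖ = 1 ∧ (∀ a ∈ l, ‖a‖ < 1) ∧
    l.length = n ∧ ∀ z, f z = blaschkeFun ρ l z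

/-- `f` is a holomorphic automorphism of the unit disk, i.e. a degree one
Blaschke product. -/
def IsDiskAut (f : ℂ → ℂ) : Prop := IsBlaschke 1 f

/-- `f` is totally ramified of degree `n`: it is associated to `z ^ n` via pre-
and post-composition with disk automorphisms. -/
def IsTotallyRamified (n : ℕ) (f : ℂ → ℂ) : Prop :=
  ∃ ε δ : ℂ → ℂ, IsDiskAut ε ∧ IsDiskAut δ ∧
    Set.EqOn f (ε ∘ (fun z => z ^ n) ∘ δ) unitDisk

/-- The disk automorphism `ι_p(z) = (z + p)/(1 + conj(p)·z)`. -/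
noncomputable def iotaAut (p : ℂ) (z : ℂ) : ℂ := (z + p) / (1 + (starRingEnd ℂ) p * z)

open Polynomial ComplexConjugate

theorem mem_unitDisk {z : ℂ} : z ∈ unitDisk ↔ ‖z‖ < 1 := mem_ball_zero_iff

section Mobius

variable {a z : ℂ}

theorem norm_one_sub_conj_mul_sq_sub_norm_sub_sq (a z : ℂ) :
    ‖1 - conj a * z‖ ^ 2 - ‖z - a‖ ^ 2 = (1 - ‖a‖ ^ 2) * (1 - ‖z‖ ^ 2) := by
  simp only [Complex.sq_norm, Complex.normSq_apply, Complex.sub_re, Complex.sub_im,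
    Complex.mul_re, Complex.mul_im, Complex.conj_re, Complex.conj_im, Complex.one_re,
    Complex.one_im]
  ring

theorem one_sub_conj_mul_ne_zero (ha : ‖a‖ < 1) (hz : ‖z‖ ≤ 1) : 1 - conj a * z ≠ 0 := by
  intro h
  have : ‖conj a * z‖ = 1 := by rw [← sub_eq_zero.mp h, norm_one]
  rw [norm_mul, Complex.norm_conj] at this
  nlinarith [norm_nonneg a, norm_nonneg z]

theorem norm_sub_div_one_sub_conj_mul_lt_one (ha : ‖a‖ < 1) (hz : ‖z‖ < 1) :
    ‖(z - a) / (1 - conj a * z)‖ < 1 := by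
  have hd := norm_pos_iff.mpr (one_sub_conj_mul_ne_zero ha hz.le)
  rw [norm_div, div_lt_one hd]
  refine lt_of_pow_lt_pow_left₀ 2 hd.le ?_
  have := norm_one_sub_conj_mul_sq_sub_norm_sub_sq a z
  have : 0 < (1 - ‖a‖ ^ 2) * (1 - ‖z‖ ^ 2) := by
    apply mul_pos <;> nlinarith [norm_nonneg a, norm_nonneg z]
  linarith

theorem norm_one_sub_conj_mul_le_norm_sub (ha : ‖a‖ < 1) (hz : 1 ≤ ‖z‖) :
    ‖1 - conj a * z‖ ≤ ‖z - a‖ := by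
  refine le_of_pow_le_pow_left₀ two_ne_zero (norm_nonneg _) ?_
  have := norm_one_sub_conj_mul_sq_sub_norm_sub_sq a z
  have : (1 - ‖a‖ ^ 2) * (1 - ‖z‖ ^ 2) ≤ 0 := by
    apply mul_nonpos_of_nonneg_of_nonpos <;> nlinarith [norm_nonneg a]
  linarith

theorem iotaAut_neg_apply (a z : ℂ) : iotaAut (-a) z = (z - a) / (1 - conj a * z) := by
  simp [iotaAut, sub_eq_add_neg]

theorem iotaAut_iotaAut_neg (ha : ‖a‖ < 1) (hz : 1 - conj a * z ≠ 0) :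
    iotaAut a (iotaAut (-a) z) = z := by
  have ha' := one_sub_conj_mul_ne_zero ha ha.le
  rw [iotaAut_neg_apply, iotaAut, div_add' _ _ _ hz, mul_div_assoc', one_add_div hz,
    div_div_div_cancel_right₀ hz, div_eq_iff]
  · ring
  · contrapose! ha'
    linear_combination ha'

end Mobius

section BlaschkePolynomials

variable {ρ z : ℂ} {l : List ℂ}

noncomputable def blaschkeNum (ρ : ℂ) (l : List ℂ) : ℂ[X] :=
  C ρ * (l.map fun a => X - C a).prod

noncomputable def blaschkeDen (l : List ℂ) : ℂ[X] :=
  (l.map fun a => 1 - C (conj a) * X).prod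

theorem eval_blaschkeNum : (blaschkeNum ρ l).eval z = ρ * (l.map fun a => z - a).prod := by
  simp [blaschkeNum, eval_list_prod, Function.comp_def]

theorem eval_blaschkeDen : (blaschkeDen l).eval z = (l.map fun a => 1 - conj a * z).prod := by
  simp [blaschkeDen, eval_list_prod, Function.comp_def]

theorem blaschkeFun_eq_div (ρ : ℂ) (l : List ℂ) (z : ℂ) :
    blaschkeFun ρ l z = (blaschkeNum ρ l).eval z / (blaschkeDen l).eval z := by
  have := Multiset.prod_map_div (m := (l : Multiset ℂ)) (f := fun a => z - a)
    (g := fun a => 1 - conj a * z)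
  simp only [Multiset.map_coe, Multiset.prod_coe] at this
  rw [blaschkeFun, this, eval_blaschkeNum, eval_blaschkeDen, mul_div_assoc]

theorem eval_blaschkeDen_ne_zero (ha : ∀ a ∈ l, ‖a‖ < 1) (hz : ‖z‖ ≤ 1) :
    (blaschkeDen l).eval z ≠ 0 := by
  rw [eval_blaschkeDen]
  refine List.prod_ne_zero fun h => ?_
  obtain ⟨a, hal, ha0⟩ := List.mem_map.mp h
  exact one_sub_conj_mul_ne_zero (ha a hal) hz ha0

theorem eval_blaschkeNum_ne_zero (hρ : ρ ≠ 0) (ha : ∀ a ∈ l, ‖a‖ < 1) (hz : 1 ≤ ‖z‖) :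
    (blaschkeNum ρ l).eval z ≠ 0 := by
  rw [eval_blaschkeNum]
  refine mul_ne_zero hρ (List.prod_ne_zero fun h => ?_)
  obtain ⟨a, hal, hza⟩ := List.mem_map.mp h
  have := ha a hal
  rw [sub_eq_zero.mp hza] at hz
  linarith

theorem norm_eval_blaschkeDen_le (hρ : ‖ρ‖ = 1) (ha : ∀ a ∈ l, ‖a‖ < 1) (hz : 1 ≤ ‖z‖) :
    ‖(blaschkeDen l).eval z‖ ≤ ‖(blaschkeNum ρ l).eval z‖ := by
  rw [eval_blaschkeDen, eval_blaschkeNum, norm_mul, hρ, one_mul, List.norm_prod, List.norm_prod,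
    List.map_map, List.map_map]
  exact List.prod_map_le_prod_map₀ _ _ (fun _ _ => norm_nonneg _)
    fun a hal => norm_one_sub_conj_mul_le_norm_sub (ha a hal) hz

theorem norm_blaschkeFun_lt_one (hρ : ‖ρ‖ = 1) (ha : ∀ a ∈ l, ‖a‖ < 1) (hl : l ≠ [])
    (hz : ‖z‖ < 1) : ‖blaschkeFun ρ l z‖ < 1 := by
  obtain ⟨a, l, rfl⟩ := List.exists_cons_of_ne_nil hl
  rw [blaschkeFun, List.map_cons, List.prod_cons, norm_mul, hρ, one_mul, norm_mul,
    List.norm_prod, List.map_map]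
  refine mul_lt_one_of_nonneg_of_lt_one_left (norm_nonneg _)
    (norm_sub_div_one_sub_conj_mul_lt_one (ha a (by simp)) hz) ?_
  calc (l.map fun b => ‖(z - b) / (1 - conj b * z)‖).prod ≤ (l.map fun _ => (1 : ℝ)).prod :=
        List.prod_map_le_prod_map₀ _ _ (fun _ _ => norm_nonneg _)
          fun b hb => (norm_sub_div_one_sub_conj_mul_lt_one (ha b (by simp [hb])) hz).le
    _ = 1 := by simp

theorem differentiableAt_blaschkeFun (ha : ∀ a ∈ l, ‖a‖ < 1) (hz : ‖z‖ ≤ 1) :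
    DifferentiableAt ℂ (blaschkeFun ρ l) z := by
  rw [funext (blaschkeFun_eq_div ρ l)]
  exact (blaschkeNum ρ l).differentiableAt.div (blaschkeDen l).differentiableAt
    (eval_blaschkeDen_ne_zero ha hz)

end BlaschkePolynomials

section ConjReflect

/-- For `z ≠ 0`, `(conjReflect n p).eval z = z ^ n * conj (p.eval (conj z)⁻¹)`: the reflection
of `p` in the unit circle, normalised by its formal degree `n`. -/
noncomputable def conjReflect (n : ℕ) (p : ℂ[X]) : ℂ[X] := (p.map (starRingEnd ℂ)).reflect n

theorem conjReflect_sub (n : ℕ) (p q : ℂ[X]) :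
    conjReflect n (p - q) = conjReflect n p - conjReflect n q := by
  simp [conjReflect, Polynomial.map_sub, reflect_sub]

theorem conjReflect_C_mul (n : ℕ) (c : ℂ) (p : ℂ[X]) :
    conjReflect n (C c * p) = C (conj c) * conjReflect n p := by
  simp [conjReflect, Polynomial.map_mul, reflect_C_mul]

theorem coeff_conjReflect_self (n : ℕ) (p : ℂ[X]) :
    (conjReflect n p).coeff n = conj (p.eval 0) := by
  simp [conjReflect, coeff_reflect, revAt_le le_rfl, coeff_zero_eq_eval_zero]

theorem natDegree_list_prod_le_length {R : Type*} [Semiring R] (l : List R[X])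
    (hl : ∀ p ∈ l, p.natDegree ≤ 1) : l.prod.natDegree ≤ l.length := by
  refine (natDegree_list_prod_le l).trans ?_
  simpa using List.sum_le_card_nsmul (l.map natDegree) 1 (by simpa using hl)

theorem conjReflect_list_prod (l : List ℂ[X]) (hl : ∀ p ∈ l, p.natDegree ≤ 1) :
    conjReflect l.length l.prod = (l.map (conjReflect 1)).prod := by
  induction l with
  | nil => simp [conjReflect]
  | cons p l ih =>
    have hp : (p.map (starRingEnd ℂ)).natDegree ≤ 1 := by
      rw [natDegree_map]; exact hl p (by simp)
    have hl' : ((l.prod).map (starRingEnd ℂ)).natDegree ≤ l.length := by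
      rw [natDegree_map]
      exact natDegree_list_prod_le_length l fun q hq => hl q (by simp [hq])
    rw [List.map_cons, List.prod_cons, List.prod_cons, ← ih fun q hq => hl q (by simp [hq]),
      List.length_cons, add_comm, conjReflect, Polynomial.map_mul, reflect_mul _ _ hp hl']
    rfl

theorem conjReflect_X_sub_C (a : ℂ) : conjReflect 1 (X - C a) = 1 - C (conj a) * X := by
  simp [conjReflect, reflect_sub, reflect_C]

theorem conjReflect_one_sub_C_mul_X (a : ℂ) : conjReflect 1 (1 - C a * X) = X - C (conj a) := by
  simp [conjReflect, reflect_sub, reflect_C_mul]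

end ConjReflect

section Factorization

variable {ρ w c : ℂ} {l : List ℂ}

theorem natDegree_blaschkeNum_le : (blaschkeNum ρ l).natDegree ≤ l.length := by
  refine (natDegree_C_mul_le _ _).trans ?_
  simpa using natDegree_list_prod_le_length (l.map fun a => X - C a) (by simp)

theorem natDegree_blaschkeDen_le : (blaschkeDen l).natDegree ≤ l.length := by
  simpa [blaschkeDen] using natDegree_list_prod_le_length (l.map fun a => 1 - C (conj a) * X)
    (by simp only [List.mem_map]; rintro _ ⟨a, -, rfl⟩; compute_degree)

theorem conjReflect_blaschkeNum (ρ : ℂ) (l : List ℂ) :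
    conjReflect l.length (blaschkeNum ρ l) = C (conj ρ) * blaschkeDen l := by
  rw [blaschkeNum, conjReflect_C_mul, ← List.length_map (f := fun a => X - C a),
    conjReflect_list_prod _ (by simp)]
  simp [blaschkeDen, Function.comp_def, conjReflect_X_sub_C]

theorem conjReflect_blaschkeDen (l : List ℂ) :
    conjReflect l.length (blaschkeDen l) = blaschkeNum 1 l := by
  rw [blaschkeDen, ← List.length_map (f := fun a => 1 - C (conj a) * X),
    conjReflect_list_prod _ (by simp only [List.mem_map]; rintro _ ⟨a, -, rfl⟩; compute_degree)]
  simp [blaschkeNum, Function.comp_def, conjReflect_one_sub_C_mul_X]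

theorem conjReflect_X_sub_C_pow (n : ℕ) (w : ℂ) :
    conjReflect n ((X - C w) ^ n) = (1 - C (conj w) * X) ^ n := by
  rw [← conjReflect_X_sub_C]
  simpa [List.prod_replicate] using conjReflect_list_prod (List.replicate n (X - C w)) (by simp)

theorem coeff_length_blaschkeNum (ρ : ℂ) (l : List ℂ) : (blaschkeNum ρ l).coeff l.length = ρ := by
  have h := coeff_conjReflect_self l.length (blaschkeDen l)
  rw [conjReflect_blaschkeDen, blaschkeNum, C_1, one_mul] at h
  simp [blaschkeNum, h, eval_blaschkeDen]

theorem norm_coeff_length_blaschkeDen_le_one (ha : ∀ a ∈ l, ‖a‖ < 1) :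
    ‖(blaschkeDen l).coeff l.length‖ ≤ 1 := by
  have h := coeff_conjReflect_self l.length (blaschkeNum 1 l)
  rw [conjReflect_blaschkeNum, map_one, C_1, one_mul] at h
  rw [h, Complex.norm_conj, eval_blaschkeNum, one_mul, List.norm_prod, List.map_map]
  calc (l.map fun a => ‖0 - a‖).prod ≤ (l.map fun _ => (1 : ℝ)).prod :=
        List.prod_map_le_prod_map₀ _ _ (fun _ _ => norm_nonneg _)
          fun a hal => by simpa using (ha a hal).le
    _ = 1 := by simp

theorem coeff_length_blaschkeNum_sub_C_mul_blaschkeDen_ne_zero (hρ : ‖ρ‖ = 1)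
    (ha : ∀ a ∈ l, ‖a‖ < 1) (hw : ‖w‖ < 1) :
    (blaschkeNum ρ l - C w * blaschkeDen l).coeff l.length ≠ 0 := by
  rw [coeff_sub, coeff_C_mul, coeff_length_blaschkeNum, sub_ne_zero]
  intro h
  have : ‖ρ‖ ≤ ‖w‖ := by
    rw [h, norm_mul]
    exact mul_le_of_le_one_right (norm_nonneg w) (norm_coeff_length_blaschkeDen_le_one ha)
  linarith

theorem eval_blaschkeNum_sub_C_mul_blaschkeDen_ne_zero (hρ : ‖ρ‖ = 1)
    (ha : ∀ a ∈ l, ‖a‖ < 1) (hw : ‖w‖ < 1) {z : ℂ} (hz : 1 ≤ ‖z‖) :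
    (blaschkeNum ρ l - C w * blaschkeDen l).eval z ≠ 0 := by
  rw [eval_sub, eval_mul, eval_C, sub_ne_zero]
  intro h
  have hle := norm_eval_blaschkeDen_le hρ ha hz
  rw [h, norm_mul] at hle
  have hden : (blaschkeDen l).eval z = 0 := by
    by_contra h0
    have := norm_pos_iff.mpr h0
    nlinarith
  exact eval_blaschkeNum_ne_zero (ρ := ρ) (by rintro rfl; simp at hρ) ha hz
    (by rw [h, hden, mul_zero])

theorem Polynomial.eq_C_leadingCoeff_mul_X_sub_C_pow {k : Type*} [Field k] [IsAlgClosed k]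
    {p : k[X]} {w : k} (h : ∀ x ∈ p.roots, x = w) :
    p = C p.leadingCoeff * (X - C w) ^ p.natDegree := by
  have hp := C_leadingCoeff_mul_prod_multiset_X_sub_C (IsAlgClosed.card_roots_eq_natDegree (p := p))
  rw [Multiset.eq_replicate.mpr ⟨IsAlgClosed.card_roots_eq_natDegree, h⟩] at hp
  simpa using hp.symm

theorem blaschkeNum_sub_C_mul_blaschkeDen_eq (hρ : ‖ρ‖ = 1) (ha : ∀ a ∈ l, ‖a‖ < 1)
    (hw : ‖w‖ < 1) (hpre : ∀ z, ‖z‖ < 1 → blaschkeFun ρ l z = w → z = w) :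
    ∃ c ≠ 0, blaschkeNum ρ l - C w * blaschkeDen l = C c * (X - C w) ^ l.length := by
  set A := blaschkeNum ρ l - C w * blaschkeDen l
  have hc := coeff_length_blaschkeNum_sub_C_mul_blaschkeDen_ne_zero hρ ha hw
  have hdeg : A.natDegree = l.length :=
    le_antisymm ((natDegree_sub_le _ _).trans
      (max_le natDegree_blaschkeNum_le ((natDegree_C_mul_le _ _).trans natDegree_blaschkeDen_le)))
      (le_natDegree_of_ne_zero hc)
  have hroots : ∀ x ∈ A.roots, x = w := by
    intro x hx
    have hAx : A.eval x = 0 := isRoot_of_mem_roots hx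
    by_cases hx1 : ‖x‖ < 1
    · refine hpre x hx1 ?_
      rw [eval_sub, eval_mul, eval_C, sub_eq_zero] at hAx
      rw [blaschkeFun_eq_div, hAx, mul_div_assoc, div_self (eval_blaschkeDen_ne_zero ha hx1.le),
        mul_one]
    · exact absurd hAx (eval_blaschkeNum_sub_C_mul_blaschkeDen_ne_zero hρ ha hw (not_lt.mp hx1))
  refine ⟨A.leadingCoeff, by rwa [leadingCoeff, hdeg], ?_⟩
  rw [← hdeg]
  exact eq_C_leadingCoeff_mul_X_sub_C_pow hroots

theorem blaschkeDen_sub_C_mul_blaschkeNum_eq (hρ : ‖ρ‖ = 1)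
    (h : blaschkeNum ρ l - C w * blaschkeDen l = C c * (X - C w) ^ l.length) :
    blaschkeDen l - C (conj w) * blaschkeNum ρ l
      = C (ρ * conj c) * (1 - C (conj w) * X) ^ l.length := by
  have hρρ : C ρ * C (conj ρ) = 1 := by
    rw [← map_mul, Complex.mul_conj, Complex.normSq_eq_norm_sq, hρ]
    simp
  have h' := congrArg (conjReflect l.length) h
  rw [conjReflect_sub, conjReflect_C_mul, conjReflect_blaschkeNum, conjReflect_blaschkeDen,
    conjReflect_C_mul, conjReflect_X_sub_C_pow] at h'
  have hnum : blaschkeNum ρ l = C ρ * blaschkeNum 1 l := by simp [blaschkeNum]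
  rw [hnum, map_mul]
  linear_combination C ρ * h' - blaschkeDen l * hρρ

end Factorization

theorem blaschkeFun_eqOn_iotaAut_comp_pow {ρ w : ℂ} {l : List ℂ} (hρ : ‖ρ‖ = 1)
    (ha : ∀ a ∈ l, ‖a‖ < 1) (hw : ‖w‖ < 1)
    (hpre : ∀ z, ‖z‖ < 1 → blaschkeFun ρ l z = w → z = w) :
    ∃ μ : ℂ, ‖μ‖ = 1 ∧
      Set.EqOn (blaschkeFun ρ l) (iotaAut w ∘ (fun z => μ * z ^ l.length) ∘ iotaAut (-w))
        unitDisk := by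
  obtain ⟨c, hc, hA⟩ := blaschkeNum_sub_C_mul_blaschkeDen_eq hρ ha hw hpre
  have hB := blaschkeDen_sub_C_mul_blaschkeNum_eq hρ hA
  have hρ0 : ρ ≠ 0 := by rintro rfl; simp at hρ
  refine ⟨c / (ρ * conj c), by simp [hρ, hc], fun z hz => ?_⟩
  have hz := mem_unitDisk.mp hz
  have hQ := eval_blaschkeDen_ne_zero ha hz.le
  have hA' := congrArg (eval z) hA
  have hB' := congrArg (eval z) hB
  simp only [eval_sub, eval_mul, eval_C, eval_pow, eval_X, eval_one] at hA' hB'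
  set P := (blaschkeNum ρ l).eval z
  set Q := (blaschkeDen l).eval z
  have hB0 : Q - conj w * P ≠ 0 := by
    rw [hB']
    exact mul_ne_zero (mul_ne_zero hρ0 (by simpa using hc))
      (pow_ne_zero _ (one_sub_conj_mul_ne_zero hw hz.le))
  have hfw : 1 - conj w * (P / Q) ≠ 0 := by
    rw [mul_div_assoc', one_sub_div hQ]
    exact div_ne_zero hB0 hQ
  have hconj : iotaAut (-w) (P / Q) = c / (ρ * conj c) * iotaAut (-w) z ^ l.length := by
    rw [iotaAut_neg_apply, iotaAut_neg_apply, div_pow, ← mul_div_mul_comm, ← hA', ← hB']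
    field_simp
  calc blaschkeFun ρ l z = iotaAut w (iotaAut (-w) (P / Q)) := by
        rw [blaschkeFun_eq_div, iotaAut_iotaAut_neg hw hfw]
    _ = _ := by rw [hconj]; rfl

section CriticalPoints

variable {𝕜 : Type*} [NontriviallyNormedField 𝕜]

def IsUniqueCriticalPoint (g : 𝕜 → 𝕜) (U : Set 𝕜) (c : 𝕜) : Prop :=
  c ∈ U ∧ ∀ z ∈ U, deriv g z = 0 ↔ z = c

theorem hasDerivAt_iterate_of_mapsTo {F : 𝕜 → 𝕜} {U : Set 𝕜} (hmaps : Set.MapsTo F U U)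
    (hdiff : ∀ z ∈ U, DifferentiableAt 𝕜 F z) (n : ℕ) {z : 𝕜} (hz : z ∈ U) :
    HasDerivAt F^[n] (∏ k ∈ Finset.range n, deriv F (F^[k] z)) z := by
  induction n generalizing z with
  | zero => simpa using hasDerivAt_id z
  | succ n ih =>
    rw [Finset.prod_range_succ', Function.iterate_succ]
    simp only [Function.iterate_succ_apply, Function.iterate_zero_apply]
    exact (ih (hmaps hz)).comp z (hdiff z hz).hasDerivAt

theorem IsUniqueCriticalPoint.eq_of_apply_eq {F : 𝕜 → 𝕜} {U : Set 𝕜} {c : 𝕜} {t : ℕ}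
    (hc : IsUniqueCriticalPoint F^[t] U c) (ht : 2 ≤ t) (hmaps : Set.MapsTo F U U)
    (hdiff : ∀ z ∈ U, DifferentiableAt 𝕜 F z) {z : 𝕜} (hz : z ∈ U) (hFz : F z = c) : z = c := by
  have hderiv := fun z (hz : z ∈ U) => (hasDerivAt_iterate_of_mapsTo hmaps hdiff t hz).deriv
  -- By the chain rule some `F^[k] c` is critical for `F`, hence for `F^[t]`, so it is `c`.
  have hFc : deriv F c = 0 := by
    obtain ⟨k, -, hk⟩ := Finset.prod_eq_zero_iff.mp <| (hderiv c hc.1) ▸ (hc.2 c hc.1).mpr rfl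
    have hkc : F^[k] c = c := by
      refine (hc.2 _ (hmaps.iterate k hc.1)).mp ?_
      rw [hderiv _ (hmaps.iterate k hc.1)]
      exact Finset.prod_eq_zero (Finset.mem_range.mpr (by omega : 0 < t)) (by simpa using hk)
    rwa [hkc] at hk
  refine (hc.2 z hz).mp ?_
  rw [hderiv z hz]
  exact Finset.prod_eq_zero (Finset.mem_range.mpr (by omega : 1 < t)) (by simpa [hFz] using hFc)

end CriticalPoints

theorem IsDiskAut.exists_eq {ε : ℂ → ℂ} (h : IsDiskAut ε) :
    ∃ ρ a : ℂ, ‖ρ‖ = 1 ∧ ‖a‖ < 1 ∧ ε = fun z => ρ * ((z - a) / (1 - conj a * z)) := by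
  obtain ⟨ρ, l, hρ, ha, hl, hε⟩ := h
  obtain ⟨a, rfl⟩ := List.length_eq_one_iff.mp hl
  exact ⟨ρ, a, hρ, ha a (by simp), funext fun z => by simp [hε, blaschkeFun]⟩

theorem hasDerivAt_mul_sub_div_one_sub_conj_mul (ρ : ℂ) {a z : ℂ} (hz : 1 - conj a * z ≠ 0) :
    HasDerivAt (fun z => ρ * ((z - a) / (1 - conj a * z)))
      (ρ * (1 - conj a * a) / (1 - conj a * z) ^ 2) z := by
  have h := (((hasDerivAt_id z).sub_const a).div
    (((hasDerivAt_id z).const_mul (conj a)).const_sub 1) hz).const_mul ρ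
  refine h.congr_deriv ?_
  simp only [id]
  ring

theorem IsTotallyRamified.exists_isUniqueCriticalPoint {N : ℕ} {g : ℂ → ℂ}
    (hg : IsTotallyRamified N g) (hN : 2 ≤ N) : ∃ c, IsUniqueCriticalPoint g unitDisk c := by
  obtain ⟨ε, δ, hε, hδ, hg⟩ := hg
  obtain ⟨ρε, aε, hρε, haε, rfl⟩ := hε.exists_eq
  obtain ⟨ρδ, aδ, hρδ, haδ, rfl⟩ := hδ.exists_eq
  refine ⟨aδ, mem_unitDisk.mpr haδ, fun z hz => ?_⟩
  have hz' := mem_unitDisk.mp hz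
  set u := ρδ * ((z - aδ) / (1 - conj aδ * z))
  have hu : ‖u ^ N‖ ≤ 1 := by
    rw [norm_pow, norm_mul, hρδ, one_mul]
    exact pow_le_one₀ (norm_nonneg _) (norm_sub_div_one_sub_conj_mul_lt_one haδ hz').le
  have hδ' := one_sub_conj_mul_ne_zero haδ hz'.le
  have hε' := one_sub_conj_mul_ne_zero haε hu
  have hder := (((hasDerivAt_mul_sub_div_one_sub_conj_mul ρε hε').comp (h := fun x => x ^ N) u
    (hasDerivAt_pow N u)).comp
    z (hasDerivAt_mul_sub_div_one_sub_conj_mul ρδ hδ')).congr_of_eventuallyEq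
    (hg.eventuallyEq_of_mem (Metric.isOpen_ball.mem_nhds hz))
  have hρε0 : ρε ≠ 0 := by rintro rfl; simp at hρε
  have hρδ0 : ρδ ≠ 0 := by rintro rfl; simp at hρδ
  rw [hder.deriv]
  simp [u, hρε0, hρδ0, hε', hδ', one_sub_conj_mul_ne_zero haε haε.le,
    one_sub_conj_mul_ne_zero haδ haδ.le, sub_eq_zero, show N ≠ 0 by omega,
    show N - 1 ≠ 0 by omega]

/-- If `f` is a finite Blaschke product of degree `s ≥ 2` and `f^t`
is totally ramified (associated to `z^{s^t}`) for some `t ≥ 2`, then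
`f = ι_p ∘ (ρ z^s) ∘ ι_{-p}` for some `p` in the unit disk and `ρ` on the unit
circle. -/
theorem stmt_9 (f : ℂ → ℂ) (s : ℕ) (hs : 2 ≤ s) (hf : IsBlaschke s f)
    (t : ℕ) (ht : 2 ≤ t) (htr : IsTotallyRamified (s ^ t) f^[t]) :
    ∃ p ρ : ℂ, ‖p‖ < 1 ∧ ‖ρ‖ = 1 ∧
      Set.EqOn f (iotaAut p ∘ (fun z => ρ * z ^ s) ∘ iotaAut (-p)) unitDisk := by
  obtain ⟨ρ, l, hρ, ha, rfl, hf⟩ := hf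
  obtain rfl : f = blaschkeFun ρ l := funext hf
  have hl : l ≠ [] := by rintro rfl; simp at hs
  have hmaps : Set.MapsTo (blaschkeFun ρ l) unitDisk unitDisk := fun z hz =>
    mem_unitDisk.mpr (norm_blaschkeFun_lt_one hρ ha hl (mem_unitDisk.mp hz))
  have hdiff : ∀ z ∈ unitDisk, DifferentiableAt ℂ (blaschkeFun ρ l) z := fun z hz =>
    differentiableAt_blaschkeFun ha (mem_unitDisk.mp hz).le
  obtain ⟨p, hp⟩ := htr.exists_isUniqueCriticalPoint (hs.trans (Nat.le_self_pow (by omega) _))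
  obtain ⟨μ, hμ, hconj⟩ := blaschkeFun_eqOn_iotaAut_comp_pow hρ ha (mem_unitDisk.mp hp.1)
    fun z hz hzp => hp.eq_of_apply_eq ht hmaps hdiff (mem_unitDisk.mpr hz) hzp
  exact ⟨p, μ, mem_unitDisk.mp hp.1, hμ, hconj⟩
end

section
/- Let f, g be rational self-maps of ℙ¹ over ℂ with deg f ≥ 1, deg g ≥ 2, and deg f < deg g, all defined over a field k finitely generated over ℚ, and let x ∈ ℙ¹(k). If g is not isotrivial over a function field model (or k is a number field), and x is not preperiodic for g, then the set {m ∈ ℕ : f^m(x) = g^m(x)} is finite. -/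
/-- Let `f, g` be rational self-maps of `ℙ¹` defined over a field
`k` finitely generated over `ℚ`, with `1 ≤ deg f < deg g` and `2 ≤ deg g`, and
let `x ∈ ℙ¹(k)` be non-preperiodic for `g`.  Assuming `g` is non-isotrivial (or
`k` is a number field), the set `{m | f^m(x) = g^m(x)}` is finite.  The height
theory over `k` is encoded by: a Weil height `h` with
`h(f z) ≤ deg f · h z + C_f` (which gives `O((deg f)^m)` growth for `deg f ≥ 2`
and `O(m)` growth for `deg f = 1`), the canonical height `hg` of `g` satisfying
`hg ∘ g = deg g · hg`, `hg ≥ 0`, `|h - hg|` bounded, and M. Baker's theorem /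
Northcott (`hg x = 0 → x` preperiodic), valid since `g` is non-isotrivial or `k`
is a number field. -/
theorem stmt_19 {P : Type*} (f g : P → P) (df dg : ℕ)
    (hdf : 1 ≤ df) (hdg : 2 ≤ dg) (hdfg : df < dg)
    (h hg : P → ℝ) (Cf : ℝ) (hCf : 0 ≤ Cf)
    (hfgrowth : ∀ z, h (f z) ≤ (df : ℝ) * h z + Cf)
    (Cg : ℝ) (hcomp : ∀ z, |h z - hg z| ≤ Cg)
    (hgcanon : ∀ z, hg (g z) = (dg : ℝ) * hg z)
    (hgnonneg : ∀ z, 0 ≤ hg z)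
    (x : P)
    (hBaker : hg x = 0 → (Set.range fun n : ℕ => g^[n] x).Finite)
    (hx : ¬ (Set.range fun n : ℕ => g^[n] x).Finite) :
    {m : ℕ | f^[m] x = g^[m] x}.Finite := by
  -- a := hg x > 0
  have ha : 0 < hg x := lt_of_le_of_ne (hgnonneg x) fun e => hx (hBaker e.symm)
  have hCg : 0 ≤ Cg := le_trans (abs_nonneg _) (hcomp x)
  have hdf' : (1 : ℝ) ≤ (df : ℝ) := by exact_mod_cast hdf
  have hdg' : (0 : ℝ) < (dg : ℝ) := by positivity
  set s : ℝ := (df : ℝ) / (dg : ℝ) with hs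
  have hs0 : 0 ≤ s := by positivity
  have hs1 : s < 1 := by
    rw [hs, div_lt_one hdg']; exact_mod_cast hdfg
  -- canonical height of iterates
  have hgiter : ∀ m : ℕ, hg (g^[m] x) = (dg : ℝ) ^ m * hg x := by
    intro m
    induction m with
    | zero => simp
    | succ m ih =>
      rw [Function.iterate_succ_apply', hgcanon, ih, pow_succ]
      ring
  -- Weil height bound on f-iterates
  have hfiter : ∀ m : ℕ, h (f^[m] x) ≤ (df : ℝ) ^ m * h x + m * Cf * (df : ℝ) ^ m := by
    intro m
    induction m with
    | zero => simp
    | succ m ih =>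
      rw [Function.iterate_succ_apply']
      calc h (f (f^[m] x)) ≤ (df : ℝ) * h (f^[m] x) + Cf := hfgrowth _
        _ ≤ (df : ℝ) * ((df : ℝ) ^ m * h x + m * Cf * (df : ℝ) ^ m) + Cf := by
            nlinarith [pow_pos (lt_of_lt_of_le one_pos hdf') m]
        _ ≤ (df : ℝ) ^ (m + 1) * h x + (m + 1 : ℕ) * Cf * (df : ℝ) ^ (m + 1) := by
            have hp : (1 : ℝ) ≤ (df : ℝ) ^ m * df :=
              le_trans (one_le_pow₀ hdf') (le_mul_of_one_le_right (by positivity) hdf')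
            rw [pow_succ]
            push_cast
            nlinarith [le_mul_of_one_le_right hCf hp]
  -- the key inclusion
  have hsub : {m : ℕ | f^[m] x = g^[m] x} ⊆
      {m : ℕ | hg x ≤ (h x + Cg + Cf) * s ^ m + Cf * (m * s ^ m)} := by
    intro m hm
    have hdfp : (0 : ℝ) < (df : ℝ) ^ m := pow_pos (lt_of_lt_of_le one_pos hdf') m
    have hdgp : (0 : ℝ) < (dg : ℝ) ^ m := pow_pos hdg' m
    have h1 : hg (g^[m] x) ≤ h (g^[m] x) + Cg := by
      have := abs_le.mp (hcomp (g^[m] x))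
      linarith [this.1]
    rw [hgiter m, ← hm] at h1
    have h2 : (dg : ℝ) ^ m * hg x ≤ (df : ℝ) ^ m * h x + m * Cf * (df : ℝ) ^ m + Cg :=
      le_trans h1 (by linarith [hfiter m])
    have h3 : (dg : ℝ) ^ m * hg x ≤ (df : ℝ) ^ m * (h x + Cg + Cf) + (df : ℝ) ^ m * (m * Cf) := by
      have hp1 : (1 : ℝ) ≤ (df : ℝ) ^ m := one_le_pow₀ hdf'
      nlinarith
    have hsm : s ^ m = (df : ℝ) ^ m / (dg : ℝ) ^ m := div_pow _ _ m
    rw [Set.mem_setOf_eq, hsm,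
      show (h x + Cg + Cf) * ((df:ℝ) ^ m / (dg:ℝ) ^ m)
          + Cf * ((m : ℝ) * ((df:ℝ) ^ m / (dg:ℝ) ^ m))
        = ((df:ℝ) ^ m * (h x + Cg + Cf) + (df:ℝ) ^ m * ((m:ℝ) * Cf)) / (dg:ℝ) ^ m
        from by ring, le_div_iff₀ hdgp]
    nlinarith
  -- RHS tends to 0, so the superset is finite
  have htend : Filter.Tendsto
      (fun m : ℕ => (h x + Cg + Cf) * s ^ m + Cf * (m * s ^ m)) Filter.atTop (nhds 0) := by
    have t1 : Filter.Tendsto (fun m : ℕ => s ^ m) Filter.atTop (nhds 0) :=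
      tendsto_pow_atTop_nhds_zero_of_lt_one hs0 hs1
    have t2 : Filter.Tendsto (fun m : ℕ => (m : ℝ) * s ^ m) Filter.atTop (nhds 0) :=
      tendsto_self_mul_const_pow_of_lt_one hs0 hs1
    have := (t1.const_mul (h x + Cg + Cf)).add (t2.const_mul Cf)
    simpa using this
  have hev : ∀ᶠ m : ℕ in Filter.atTop,
      (h x + Cg + Cf) * s ^ m + Cf * (m * s ^ m) < hg x :=
    htend.eventually_lt_const ha
  obtain ⟨N, hN⟩ := Filter.eventually_atTop.mp hev
  refine (Set.finite_Iio N).subset fun m hm => ?_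
  by_contra hmN
  exact absurd (hsub hm) (not_le.mpr (hN m (le_of_not_gt hmN)))
end
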